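/- Let E, M be classes of morphisms in a V-category B that is tensored and cotensored. Then the following are equivalent: (1) (E,M) is a V-prefactorization system on B; (2) (E,M) is an ordinary prefactorization system on B, E is closed under tensors, and M is closed under cotensors. -/

import Mathlib

open CategoryTheory CategoryTheory.Limits CategoryTheory.MonoidalCategory

universe w v₁ v₂ v₃ v₄ u₁ u₂ u₃ u₄

namespace EnrichedFS

variable (V : Type u₁) [Category.{v₁} V] [MonoidalCategory V] [SymmetricCategory V]
  [MonoidalClosed V]
variable (B : Type u₂) [Category.{v₂} B] [EnrichedOrdinaryCategory V B]

/-- `e` is `V`-orthogonal to `m`: the square of hom-objects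
with top `B(A₂,m)`, left `B(e,X₁)`, right `B(e,X₂)`, bottom `B(A₁,m)`
is a pullback in `V`. -/
def VOrth {A₁ A₂ X₁ X₂ : B} (e : A₁ ⟶ A₂) (m : X₁ ⟶ X₂) : Prop :=
  IsPullback (eHomWhiskerLeft V A₂ m) (eHomWhiskerRight V e X₁)
    (eHomWhiskerRight V e X₂) (eHomWhiskerLeft V A₁ m)

/-- `H^{↓V}`: the class of morphisms to which every member of `H` is `V`-orthogonal. -/
def vRlp (H : MorphismProperty B) : MorphismProperty B :=
  fun _ _ m => ∀ ⦃A₁ A₂ : B⦄ (e : A₁ ⟶ A₂), H e → VOrth V B e m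

/-- `M^{↑V}`: the class of morphisms which are `V`-orthogonal to every member of `M`. -/
def vLlp (M : MorphismProperty B) : MorphismProperty B :=
  fun _ _ e => ∀ ⦃X₁ X₂ : B⦄ (m : X₁ ⟶ X₂), M m → VOrth V B e m

/-- ordinary orthogonality: unique diagonal fillers for every commutative square. -/
def OrdOrth {A₁ A₂ X₁ X₂ : B} (e : A₁ ⟶ A₂) (m : X₁ ⟶ X₂) : Prop :=
  ∀ (u : A₁ ⟶ X₁) (v : A₂ ⟶ X₂), u ≫ m = e ≫ v →
    ∃! d : A₂ ⟶ X₁, e ≫ d = u ∧ d ≫ m = v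

/-- `H^{↓}` (ordinary). -/
def ordRlp (H : MorphismProperty B) : MorphismProperty B :=
  fun _ _ m => ∀ ⦃A₁ A₂ : B⦄ (e : A₁ ⟶ A₂), H e → OrdOrth B e m

/-- `M^{↑}` (ordinary). -/
def ordLlp (M : MorphismProperty B) : MorphismProperty B :=
  fun _ _ e => ∀ ⦃X₁ X₂ : B⦄ (m : X₁ ⟶ X₂), M m → OrdOrth B e m

/-- `(E,M)` is a `V`-prefactorization system: `E^{↓V} = M` and `M^{↑V} = E`. -/
def IsVPrefactorization (E M : MorphismProperty B) : Prop :=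
  vRlp V B E = M ∧ vLlp V B M = E

/-- `(E,M)` is an ordinary prefactorization system. -/
def IsOrdPrefactorization (E M : MorphismProperty B) : Prop :=
  ordRlp B E = M ∧ ordLlp B M = E

/-- every morphism factors as a morphism in `E` followed by a morphism in `M`. -/
def FactorizationsExist (E M : MorphismProperty B) : Prop :=
  ∀ ⦃X Y : B⦄ (f : X ⟶ Y), ∃ (Z : B) (e : X ⟶ Z) (m : Z ⟶ Y), E e ∧ M m ∧ e ≫ m = f

/-- `(E,M)` is a `V`-factorization system. -/
def IsVFactorizationSystem (E M : MorphismProperty B) : Prop :=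
  IsVPrefactorization V B E M ∧ FactorizationsExist B E M

/-- `(E,M)` is an ordinary factorization system. -/
def IsOrdFactorizationSystem (E M : MorphismProperty B) : Prop :=
  IsOrdPrefactorization B E M ∧ FactorizationsExist B E M

/-- intersection of two classes of morphisms. -/
def interProp (M N : MorphismProperty B) : MorphismProperty B := fun _ _ f => M f ∧ N f

/-- `V`-monomorphisms. -/
def vMono : MorphismProperty B := fun _ _ m => ∀ A : B, Mono (eHomWhiskerLeft V A m)

/-- `V`-epimorphisms. -/
def vEpi : MorphismProperty B := fun _ _ e => ∀ A : B, Mono (eHomWhiskerRight V e A)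

/-- `V`-strong monomorphisms. -/
def vStrongMono : MorphismProperty B := fun _ _ m =>
  vMono V B m ∧ ∀ ⦃A₁ A₂ : B⦄ (e : A₁ ⟶ A₂), vEpi V B e → VOrth V B e m

/-- `V`-strong epimorphisms. -/
def vStrongEpi : MorphismProperty B := fun _ _ e =>
  vEpi V B e ∧ ∀ ⦃X₁ X₂ : B⦄ (m : X₁ ⟶ X₂), vMono V B m → VOrth V B e m

/-- ordinary monomorphisms, as a class. -/
def ordMono : MorphismProperty B := fun _ _ m => Mono m

/-- ordinary epimorphisms, as a class. -/
def ordEpi : MorphismProperty B := fun _ _ e => Epi e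

/-- ordinary strong monomorphisms. -/
def ordStrongMono : MorphismProperty B := fun _ _ m =>
  Mono m ∧ ∀ ⦃A₁ A₂ : B⦄ (e : A₁ ⟶ A₂), Epi e → OrdOrth B e m

/-- ordinary strong epimorphisms. -/
def ordStrongEpi : MorphismProperty B := fun _ _ e =>
  Epi e ∧ ∀ ⦃X₁ X₂ : B⦄ (m : X₁ ⟶ X₂), Mono m → OrdOrth B e m

/-- closure under composition with isomorphisms on either side. -/
def ClosedUnderIsoComp (E : MorphismProperty B) : Prop :=
  (∀ ⦃X Y Z : B⦄ (e : X ⟶ Y) (i : Y ⟶ Z), E e → IsIso i → E (e ≫ i)) ∧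
  (∀ ⦃X Y Z : B⦄ (i : X ⟶ Y) (e : Y ⟶ Z), IsIso i → E e → E (i ≫ e))

/-- a commutative square which is a `V`-pullback: it is sent to a pullback square
in `V` by every hom functor `B(A,-)`. -/
def IsVPullbackSq {P X Y Z : B} (p₁ : P ⟶ X) (p₂ : P ⟶ Y) (f : X ⟶ Z) (g : Y ⟶ Z) : Prop :=
  p₁ ≫ f = p₂ ≫ g ∧
    ∀ A : B, IsPullback (eHomWhiskerLeft V A p₁) (eHomWhiskerLeft V A p₂)
      (eHomWhiskerLeft V A f) (eHomWhiskerLeft V A g)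

/-- a commutative square which is a `V`-pushout: it is sent to a pullback square
in `V` by every hom functor `B(-,A)`. -/
def IsVPushoutSq {X Y₁ Y₂ Q : B} (f₁ : X ⟶ Y₁) (f₂ : X ⟶ Y₂) (i₁ : Y₁ ⟶ Q) (i₂ : Y₂ ⟶ Q) :
    Prop :=
  f₁ ≫ i₁ = f₂ ≫ i₂ ∧
    ∀ A : B, IsPullback (eHomWhiskerRight V i₁ A) (eHomWhiskerRight V i₂ A)
      (eHomWhiskerRight V f₁ A) (eHomWhiskerRight V f₂ A)

/-- `B` has `V`-kernel pairs. -/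
def HasVKernelPairs : Prop :=
  ∀ ⦃X Y : B⦄ (f : X ⟶ Y), ∃ (P : B) (p₁ p₂ : P ⟶ X), IsVPullbackSq V B p₁ p₂ f f

/-- `B` has `V`-cokernel pairs. -/
def HasVCokernelPairs : Prop :=
  ∀ ⦃X Y : B⦄ (f : X ⟶ Y), ∃ (Q : B) (i₁ i₂ : Y ⟶ Q), IsVPushoutSq V B f f i₁ i₂

/-- `m : P ⟶ C` is a `V`-fibre-product (`V`-wide-pullback) of the family `f i : X i ⟶ C`,
with projections `π i`. -/
def IsVFibreProduct {ι : Type w} {C : B} {X : ι → B} (f : ∀ i, X i ⟶ C)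
    {P : B} (m : P ⟶ C) (π : ∀ i, P ⟶ X i) : Prop :=
  (∀ i, π i ≫ f i = m) ∧
    ∀ (A : B) (Z : V) (z : Z ⟶ (A ⟶[V] C)) (zi : ∀ i, Z ⟶ (A ⟶[V] X i)),
      (∀ i, zi i ≫ eHomWhiskerLeft V A (f i) = z) →
        ∃! t : Z ⟶ (A ⟶[V] P), t ≫ eHomWhiskerLeft V A m = z ∧
          ∀ i, t ≫ eHomWhiskerLeft V A (π i) = zi i

/-- `m : P ⟶ C` is an ordinary fibre product (wide pullback) of the family `f i : X i ⟶ C`. -/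
def OrdIsFibreProduct {ι : Type w} {C : B} {X : ι → B} (f : ∀ i, X i ⟶ C)
    {P : B} (m : P ⟶ C) (π : ∀ i, P ⟶ X i) : Prop :=
  (∀ i, π i ≫ f i = m) ∧
    ∀ ⦃W' : B⦄ (z : W' ⟶ C) (zi : ∀ i, W' ⟶ X i), (∀ i, zi i ≫ f i = z) →
      ∃! t : W' ⟶ P, t ≫ m = z ∧ ∀ i, t ≫ π i = zi i

/-- a cone is a `V`-limit cone: it is sent to a limit cone in `V` by every `B(A,-)`. -/
def IsVLimitCone {J : Type u₃} [Category.{v₃} J] {D : J ⥤ B} (c : Cone D) : Prop :=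
  ∀ (A : B) (Z : V) (z : ∀ j : J, Z ⟶ (A ⟶[V] D.obj j)),
    (∀ ⦃j j' : J⦄ (φ : j ⟶ j'), z j ≫ eHomWhiskerLeft V A (D.map φ) = z j') →
      ∃! t : Z ⟶ (A ⟶[V] c.pt), ∀ j, t ≫ eHomWhiskerLeft V A (c.π.app j) = z j

/-- a cocone is a `V`-colimit cocone: it is sent to a limit cone in `V` by every `B(-,A)`. -/
def IsVColimitCocone {J : Type u₃} [Category.{v₃} J] {D : J ⥤ B} (c : Cocone D) : Prop :=
  ∀ (A : B) (Z : V) (z : ∀ j : J, Z ⟶ (D.obj j ⟶[V] A)),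
    (∀ ⦃j j' : J⦄ (φ : j ⟶ j'), z j' ≫ eHomWhiskerRight V (D.map φ) A = z j) →
      ∃! t : Z ⟶ (c.pt ⟶[V] A), ∀ j, t ≫ eHomWhiskerRight V (c.ι.app j) A = z j

/-- `B` has small `V`-limits. -/
def HasSmallVLimits : Prop :=
  ∀ (J : Type v₂) [SmallCategory J] (D : J ⥤ B), ∃ c : Cone D, IsVLimitCone V B c

/-- `B` has small `V`-colimits. -/
def HasSmallVColimits : Prop :=
  ∀ (J : Type v₂) [SmallCategory J] (D : J ⥤ B), ∃ c : Cocone D, IsVColimitCocone V B c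

/-- `B` has finite `V`-limits. -/
def HasFiniteVLimits : Prop :=
  ∀ (J : Type) [SmallCategory J] [FinCategory J] (D : J ⥤ B),
    ∃ c : Cone D, IsVLimitCone V B c

/-- `B` is well-powered with respect to the class `M`: every object has,
up to isomorphism, only a set of `M`-subobjects. -/
def WellPoweredWrt (M : MorphismProperty B) : Prop :=
  ∀ X : B, ∃ (ι : Type v₂) (Y : ι → B) (f : ∀ i, Y i ⟶ X), (∀ i, M (f i)) ∧
    ∀ ⦃Z : B⦄ (g : Z ⟶ X), M g → ∃ (i : ι) (h : Z ≅ Y i), h.hom ≫ f i = g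

/-- `B` is co-well-powered with respect to the class `E`. -/
def CoWellPoweredWrt (E : MorphismProperty B) : Prop :=
  ∀ X : B, ∃ (ι : Type v₂) (Y : ι → B) (f : ∀ i, X ⟶ Y i), (∀ i, E (f i)) ∧
    ∀ ⦃Z : B⦄ (g : X ⟶ Z), E g → ∃ (i : ι) (h : Y i ≅ Z), f i ≫ h.hom = g

/-- comparison morphism `B(T, X) ⟶ [v, B(A, X)]` in `V` induced by a
unit `η : v ⟶ B(A, T)`, where `T` is a candidate tensor `v ⊗ A`. -/
def tensorComparison {v : V} {A T : B} (η : v ⟶ (A ⟶[V] T)) (X : B) :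
    (T ⟶[V] X) ⟶ (ihom v).obj (A ⟶[V] X) :=
  MonoidalClosed.curry (eComp V A T X) ≫ (MonoidalClosed.pre η).app (A ⟶[V] X)

/-- `η : v ⟶ B(A,T)` exhibits `T` as a tensor `v ⊗ A` in the enriched sense. -/
def IsTensorUnit (v : V) (A T : B) (η : v ⟶ (A ⟶[V] T)) : Prop :=
  ∀ X : B, IsIso (tensorComparison V B η X)

/-- `B` is tensored over `V`. -/
def Tensored : Prop :=
  ∀ (v : V) (A : B), ∃ (T : B) (η : v ⟶ (A ⟶[V] T)), IsTensorUnit V B v A T η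

/-- `E` is closed under tensors: whenever tensors exist, `v ⊗ e` lies in `E` for `e ∈ E`. -/
def ClosedUnderTensors (E : MorphismProperty B) : Prop :=
  ∀ (v : V) ⦃A₁ A₂ : B⦄ (e : A₁ ⟶ A₂) {T₁ T₂ : B}
    (η₁ : v ⟶ (A₁ ⟶[V] T₁)) (η₂ : v ⟶ (A₂ ⟶[V] T₂)),
    IsTensorUnit V B v A₁ T₁ η₁ → IsTensorUnit V B v A₂ T₂ η₂ → E e →
      ∀ t : T₁ ⟶ T₂, η₁ ≫ eHomWhiskerLeft V A₁ t = η₂ ≫ eHomWhiskerRight V e T₂ → E t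

/-- comparison morphism `B(A, C) ⟶ [v, B(A, X)]` in `V` induced by a
counit `ε : v ⟶ B(C, X)`, where `C` is a candidate cotensor `[v, X]`. -/
def cotensorComparison {v : V} {C X : B} (ε : v ⟶ (C ⟶[V] X)) (A : B) :
    (A ⟶[V] C) ⟶ (ihom v).obj (A ⟶[V] X) :=
  MonoidalClosed.curry ((β_ (C ⟶[V] X) (A ⟶[V] C)).hom ≫ eComp V A C X) ≫
    (MonoidalClosed.pre ε).app (A ⟶[V] X)

/-- `ε : v ⟶ B(C,X)` exhibits `C` as a cotensor `[v, X]` in the enriched sense. -/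
def IsCotensorCounit (v : V) (X C : B) (ε : v ⟶ (C ⟶[V] X)) : Prop :=
  ∀ A : B, IsIso (cotensorComparison V B ε A)

/-- `B` is cotensored over `V`. -/
def Cotensored : Prop :=
  ∀ (v : V) (X : B), ∃ (C : B) (ε : v ⟶ (C ⟶[V] X)), IsCotensorCounit V B v X C ε

/-- `M` is closed under cotensors: `[v, m]` lies in `M` for `m ∈ M`. -/
def ClosedUnderCotensors (M : MorphismProperty B) : Prop :=
  ∀ (v : V) ⦃X₁ X₂ : B⦄ (m : X₁ ⟶ X₂) {C₁ C₂ : B}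
    (ε₁ : v ⟶ (C₁ ⟶[V] X₁)) (ε₂ : v ⟶ (C₂ ⟶[V] X₂)),
    IsCotensorCounit V B v X₁ C₁ ε₁ → IsCotensorCounit V B v X₂ C₂ ε₂ → M m →
      ∀ t : C₁ ⟶ C₂, ε₁ ≫ eHomWhiskerLeft V C₁ m = ε₂ ≫ eHomWhiskerRight V t X₂ → M t

/-- a `V`-functor from a `V`-category `J` to an enriched ordinary category `D`. -/
structure VFunctor (J : Type u₃) [EnrichedCategory V J]
    (D : Type u₄) [Category.{v₄} D] [EnrichedOrdinaryCategory V D] where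
  obj : J → D
  emap : ∀ X Y : J, (X ⟶[V] Y) ⟶ (obj X ⟶[V] obj Y)
  emap_id : ∀ X : J, eId V X ≫ emap X X = eId V (obj X)
  emap_comp : ∀ X Y Z : J,
    eComp V X Y Z ≫ emap X Z = (emap X Y ⊗ₘ emap Y Z) ≫ eComp V (obj X) (obj Y) (obj Z)

/-- the underlying action of a `V`-functor on ordinary morphisms. -/
def VFunctor.map' {J : Type u₃} [Category.{v₃} J] [EnrichedOrdinaryCategory V J]
    {D : Type u₄} [Category.{v₄} D] [EnrichedOrdinaryCategory V D]
    (F : VFunctor V J D) {X Y : J} (f : X ⟶ Y) : F.obj X ⟶ F.obj Y :=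
  (eHomEquiv V).symm (eHomEquiv V f ≫ F.emap X Y)

/-- a `V`-adjunction `F ⊣ G`, given by a `V`-natural isomorphism
`D(F A, X) ≅ A(A, G X)` of hom-objects. -/
structure VAdjunction {A : Type u₃} [Category.{v₃} A] [EnrichedOrdinaryCategory V A]
    {D : Type u₄} [Category.{v₄} D] [EnrichedOrdinaryCategory V D]
    (F : VFunctor V A D) (G : VFunctor V D A) where
  iso : ∀ (X : A) (Y : D), (F.obj X ⟶[V] Y) ≅ (X ⟶[V] G.obj Y)
  nat_right : ∀ (X : A) (Y Y' : D),
    eComp V (F.obj X) Y Y' ≫ (iso X Y').hom =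
      ((iso X Y).hom ⊗ₘ G.emap Y Y') ≫ eComp V X (G.obj Y) (G.obj Y')
  nat_left : ∀ (X X' : A) (Y : D),
    (F.emap X X' ▷ (F.obj X' ⟶[V] Y)) ≫ eComp V (F.obj X) (F.obj X') Y ≫ (iso X Y).hom =
      ((X ⟶[V] X') ◁ (iso X' Y).hom) ≫ eComp V X X' (G.obj Y)

/-- a `V`-functor `J → V` (a weight), presented by its uncurried action. -/
structure VWeight (J : Type u₃) [EnrichedCategory V J] where
  obj : J → V
  act : ∀ j j' : J, obj j ⊗ (j ⟶[V] j') ⟶ obj j'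
  act_id : ∀ j : J, (obj j ◁ eId V j) ≫ act j j = (ρ_ (obj j)).hom
  act_comp : ∀ j j' j'' : J,
    (α_ (obj j) (j ⟶[V] j') (j' ⟶[V] j'')).inv ≫ (act j j' ▷ (j' ⟶[V] j'')) ≫ act j' j'' =
      (obj j ◁ eComp V j j' j'') ≫ act j j''

/-- a `V`-natural transformation between `V`-functors. -/
structure VNatTrans {J : Type u₃} [EnrichedCategory V J]
    {D : Type u₄} [Category.{v₄} D] [EnrichedOrdinaryCategory V D]
    (F G : VFunctor V J D) where
  app : ∀ j : J, F.obj j ⟶ G.obj j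
  naturality : ∀ j j' : J,
    F.emap j j' ≫ eHomWhiskerLeft V (F.obj j) (app j') =
      G.emap j j' ≫ eHomWhiskerRight V (app j) (G.obj j')

/-- `cone` exhibits `L` as the `V`-enriched weighted (indexed) limit `[W, F]`. -/
structure IsWeightedLimit {J : Type u₃} [EnrichedCategory V J]
    {D : Type u₄} [Category.{v₄} D] [EnrichedOrdinaryCategory V D]
    (W : VWeight V J) (F : VFunctor V J D) (L : D)
    (cone : ∀ j : J, W.obj j ⟶ (L ⟶[V] F.obj j)) : Prop where
  natural : ∀ j j' : J,
    W.act j j' ≫ cone j' =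
      (cone j ▷ (j ⟶[V] j')) ≫ ((L ⟶[V] F.obj j) ◁ F.emap j j') ≫
        eComp V L (F.obj j) (F.obj j')
  universal : ∀ (A : D) (Z : V) (μ : ∀ j : J, Z ⊗ W.obj j ⟶ (A ⟶[V] F.obj j)),
    (∀ j j' : J,
      (Z ◁ W.act j j') ≫ μ j' =
        (α_ Z (W.obj j) (j ⟶[V] j')).inv ≫ (μ j ▷ (j ⟶[V] j')) ≫
          ((A ⟶[V] F.obj j) ◁ F.emap j j') ≫ eComp V A (F.obj j) (F.obj j')) →
      ∃! t : Z ⟶ (A ⟶[V] L), ∀ j : J,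
        (t ▷ W.obj j) ≫ ((A ⟶[V] L) ◁ cone j) ≫ eComp V A L (F.obj j) = μ j

/-- `B` is `V`-finitely-well-complete: it has finite `V`-limits and `V`-intersections
of arbitrary class-indexed families of `V`-strong monomorphisms. -/
def VFinitelyWellComplete : Prop :=
  HasFiniteVLimits V B ∧
    ∀ {ι : Type (max u₂ v₂)} {C : B} (X : ι → B) (f : ∀ i, X i ⟶ C),
      (∀ i, vStrongMono V B (f i)) →
        ∃ (P : B) (m : P ⟶ C) (π : ∀ i, P ⟶ X i), IsVFibreProduct V B f m π

/-- `B` is finitely well-complete (ordinary sense): it has finite limits and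
intersections of arbitrary class-indexed families of strong monomorphisms. -/
def OrdFinitelyWellComplete : Prop :=
  HasFiniteLimits B ∧
    ∀ {ι : Type (max u₂ v₂)} {C : B} (X : ι → B) (f : ∀ i, X i ⟶ C),
      (∀ i, ordStrongMono B (f i)) →
        ∃ (P : B) (m : P ⟶ C) (π : ∀ i, P ⟶ X i), OrdIsFibreProduct B f m π

end EnrichedFS

/-!
A morphism `Z ⟶ B(A, X)` in `V` is the same as a morphism `Z ⊗ A ⟶ X` in `B`, and also the same
as a morphism `A ⟶ [Z, X]`. Testing the pullback square defining `e ↓_V m` on generalized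
elements `Z` therefore shows that `e ↓_V m` holds iff `Z ⊗ e ↓ m` for all `Z`, and iff
`e ↓ [Z, m]` for all `Z`. Conversely `V`-orthogonality passes to tensors and cotensors, since
`B(Z ⊗ A, X) ≅ [Z, B(A, X)] ≅ B(A, [Z, X])` and `[Z, -]` preserves pullbacks. Hence `V`-orthogonal
complements are closed under (co)tensors, and for a class closed under tensors (resp. cotensors)
its `V`-orthogonal complement on the right (resp. left) is its ordinary one.
-/

namespace EnrichedFS

lemma isPullback_of_existsUnique_lift {𝒞 : Type*} [Category 𝒞] {P X Y Z : 𝒞}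
    {fst : P ⟶ X} {snd : P ⟶ Y} {f : X ⟶ Z} {g : Y ⟶ Z} (w : fst ≫ f = snd ≫ g)
    (h : ∀ (W : 𝒞) (a : W ⟶ X) (b : W ⟶ Y), a ≫ f = b ≫ g →
      ∃! l : W ⟶ P, l ≫ fst = a ∧ l ≫ snd = b) :
    IsPullback fst snd f g :=
  IsPullback.of_isLimit (PullbackCone.IsLimit.mk w
    (fun s => (h s.pt s.fst s.snd s.condition).choose)
    (fun s => (h s.pt s.fst s.snd s.condition).choose_spec.1.1)
    (fun s => (h s.pt s.fst s.snd s.condition).choose_spec.1.2)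
    (fun s l hl₁ hl₂ => (h s.pt s.fst s.snd s.condition).choose_spec.2 l ⟨hl₁, hl₂⟩))

section

variable {V : Type u₁} [Category.{v₁} V] [MonoidalCategory V]
  {B : Type u₂} [Category.{v₂} B] [EnrichedOrdinaryCategory V B]

lemma eHomEquiv_comp_eq_comp_eHomWhiskerLeft {A X X' : B} (f : A ⟶ X) (g : X ⟶ X') :
    eHomEquiv V (f ≫ g) = eHomEquiv V f ≫ eHomWhiskerLeft V A g := by
  dsimp [eHomWhiskerLeft]
  rw [eHomEquiv_comp, rightUnitor_inv_naturality_assoc, MonoidalCategory.tensorHom_def,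
    unitors_inv_equal, Category.assoc]

lemma eHomEquiv_comp_eq_comp_eHomWhiskerRight {A X X' : B} (f : A ⟶ X) (g : X ⟶ X') :
    eHomEquiv V (f ≫ g) = eHomEquiv V g ≫ eHomWhiskerRight V f X' := by
  dsimp [eHomWhiskerRight]
  rw [eHomEquiv_comp, leftUnitor_inv_naturality_assoc, tensorHom_def',
    Category.assoc, whisker_exchange_assoc]

lemma eHomWhiskerLeft_whiskerRight_eComp (A : B) {T₁ T₂ : B} (t : T₁ ⟶ T₂) (X : B) :
    (eHomWhiskerLeft V A t ▷ (T₂ ⟶[V] X)) ≫ eComp V A T₂ X =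
      ((A ⟶[V] T₁) ◁ eHomWhiskerRight V t X) ≫ eComp V A T₁ X := by
  dsimp [eHomWhiskerLeft, eHomWhiskerRight]
  conv_lhs => rw [comp_whiskerRight_assoc, comp_whiskerRight_assoc, ← e_assoc',
    associator_naturality_middle_assoc, triangle_assoc_comp_right_inv_assoc]
  conv_rhs => rw [MonoidalCategory.whiskerLeft_comp_assoc,
    MonoidalCategory.whiskerLeft_comp_assoc]

lemma VOrth.ordOrth {A₁ A₂ X₁ X₂ : B} {e : A₁ ⟶ A₂} {m : X₁ ⟶ X₂}
    (h : VOrth V B e m) : OrdOrth B e m := by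
  intro u w huw
  have hw : eHomEquiv V w ≫ eHomWhiskerRight V e X₂ =
      eHomEquiv V u ≫ eHomWhiskerLeft V A₁ m := by
    rw [← eHomEquiv_comp_eq_comp_eHomWhiskerRight, ← eHomEquiv_comp_eq_comp_eHomWhiskerLeft, huw]
  refine ⟨(eHomEquiv V).symm (h.lift (eHomEquiv V w) (eHomEquiv V u) hw), ⟨?_, ?_⟩, ?_⟩
  · apply (eHomEquiv V).injective
    rw [eHomEquiv_comp_eq_comp_eHomWhiskerRight, Equiv.apply_symm_apply, h.lift_snd]
  · apply (eHomEquiv V).injective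
    rw [eHomEquiv_comp_eq_comp_eHomWhiskerLeft, Equiv.apply_symm_apply, h.lift_fst]
  · rintro d ⟨hd₁, hd₂⟩
    apply (eHomEquiv V).injective
    rw [Equiv.apply_symm_apply]
    apply h.hom_ext
    · rw [h.lift_fst, ← eHomEquiv_comp_eq_comp_eHomWhiskerLeft, hd₂]
    · rw [h.lift_snd, ← eHomEquiv_comp_eq_comp_eHomWhiskerRight, hd₁]

lemma vRlp_le_ordRlp (H : MorphismProperty B) : vRlp V B H ≤ ordRlp B H :=
  fun _ _ _ hm _ _ e he => (hm e he).ordOrth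

lemma vLlp_le_ordLlp (H : MorphismProperty B) : vLlp V B H ≤ ordLlp B H :=
  fun _ _ _ he _ _ m hm => (he m hm).ordOrth

section Tensor

variable [MonoidalClosed V]

lemma uncurry_tensorComparison {v : V} {A T : B} (η : v ⟶ (A ⟶[V] T)) (X : B) :
    MonoidalClosed.uncurry (tensorComparison V B η X) =
      (η ▷ (T ⟶[V] X)) ≫ eComp V A T X := by
  dsimp [tensorComparison]
  rw [MonoidalClosed.uncurry_eq, MonoidalCategory.whiskerLeft_comp_assoc,
    ← MonoidalClosed.uncurry_eq, MonoidalClosed.uncurry_pre, whisker_exchange_assoc,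
    ← MonoidalClosed.uncurry_eq, MonoidalClosed.uncurry_curry]

lemma uncurry_eHomEquiv_comp_tensorComparison {v : V} {A T X : B} (η : v ⟶ (A ⟶[V] T))
    (t : T ⟶ X) :
    (ρ_ v).inv ≫ MonoidalClosed.uncurry (eHomEquiv V t ≫ tensorComparison V B η X) =
      η ≫ eHomWhiskerLeft V A t := by
  rw [MonoidalClosed.uncurry_natural_left, uncurry_tensorComparison,
    whisker_exchange_assoc, ← rightUnitor_inv_naturality_assoc]
  rfl

lemma tensorComparison_map_eHomWhiskerLeft {v : V} {A T : B} (η : v ⟶ (A ⟶[V] T))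
    {X X' : B} (g : X ⟶ X') :
    tensorComparison V B η X ≫ (ihom v).map (eHomWhiskerLeft V A g) =
      eHomWhiskerLeft V T g ≫ tensorComparison V B η X' := by
  apply MonoidalClosed.uncurry_injective
  rw [MonoidalClosed.uncurry_natural_right, MonoidalClosed.uncurry_natural_left,
    uncurry_tensorComparison, uncurry_tensorComparison, Category.assoc,
    eComp_eHomWhiskerLeft, whisker_exchange_assoc]

lemma tensorComparison_map_eHomWhiskerRight {v : V} {A₁ A₂ T₁ T₂ : B} {e : A₁ ⟶ A₂}
    {η₁ : v ⟶ (A₁ ⟶[V] T₁)} {η₂ : v ⟶ (A₂ ⟶[V] T₂)} {t : T₁ ⟶ T₂}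
    (ht : η₁ ≫ eHomWhiskerLeft V A₁ t = η₂ ≫ eHomWhiskerRight V e T₂) (X : B) :
    tensorComparison V B η₂ X ≫ (ihom v).map (eHomWhiskerRight V e X) =
      eHomWhiskerRight V t X ≫ tensorComparison V B η₁ X := by
  apply MonoidalClosed.uncurry_injective
  rw [MonoidalClosed.uncurry_natural_right, MonoidalClosed.uncurry_natural_left,
    uncurry_tensorComparison, uncurry_tensorComparison, Category.assoc,
    eComp_eHomWhiskerRight, ← comp_whiskerRight_assoc, ← ht, comp_whiskerRight_assoc,
    eHomWhiskerLeft_whiskerRight_eComp, whisker_exchange_assoc]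

lemma IsTensorUnit.bijective {v : V} {A T : B} {η : v ⟶ (A ⟶[V] T)}
    (h : IsTensorUnit V B v A T η) (X : B) :
    Function.Bijective fun t : T ⟶ X => η ≫ eHomWhiskerLeft V A t := by
  have := h X
  refine (Function.bijective_iff_existsUnique _).2 fun z => ⟨(eHomEquiv V).symm
    (MonoidalClosed.curry ((ρ_ v).hom ≫ z) ≫ inv (tensorComparison V B η X)), ?_, ?_⟩
  · dsimp only
    rw [← uncurry_eHomEquiv_comp_tensorComparison, Equiv.apply_symm_apply, Category.assoc,
      IsIso.inv_hom_id, Category.comp_id, MonoidalClosed.uncurry_curry, Iso.inv_hom_id_assoc]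
  · intro t ht
    rw [← uncurry_eHomEquiv_comp_tensorComparison] at ht
    apply (eHomEquiv V).injective
    rw [Equiv.apply_symm_apply, IsIso.eq_comp_inv]
    apply MonoidalClosed.uncurry_injective
    rw [MonoidalClosed.uncurry_curry, ← ht, Iso.hom_inv_id_assoc]

lemma IsTensorUnit.comp_eHomWhiskerLeft_inj {v : V} {A T X : B} {η : v ⟶ (A ⟶[V] T)}
    (h : IsTensorUnit V B v A T η) {f g : T ⟶ X} :
    η ≫ eHomWhiskerLeft V A f = η ≫ eHomWhiskerLeft V A g ↔ f = g :=
  (h.bijective X).injective.eq_iff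

lemma VOrth.tensor {v : V} {A₁ A₂ X₁ X₂ T₁ T₂ : B} {e : A₁ ⟶ A₂} {m : X₁ ⟶ X₂}
    {η₁ : v ⟶ (A₁ ⟶[V] T₁)} {η₂ : v ⟶ (A₂ ⟶[V] T₂)} (he : VOrth V B e m)
    (h₁ : IsTensorUnit V B v A₁ T₁ η₁) (h₂ : IsTensorUnit V B v A₂ T₂ η₂)
    {t : T₁ ⟶ T₂} (ht : η₁ ≫ eHomWhiskerLeft V A₁ t = η₂ ≫ eHomWhiskerRight V e T₂) :
    VOrth V B t m := by
  have := h₁ X₁; have := h₁ X₂; have := h₂ X₁; have := h₂ X₂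
  exact (he.map (ihom v)).of_iso'
    (asIso (tensorComparison V B η₂ X₁)) (asIso (tensorComparison V B η₂ X₂))
    (asIso (tensorComparison V B η₁ X₁)) (asIso (tensorComparison V B η₁ X₂))
    (tensorComparison_map_eHomWhiskerLeft η₂ m) (tensorComparison_map_eHomWhiskerRight ht X₁)
    (tensorComparison_map_eHomWhiskerRight ht X₂) (tensorComparison_map_eHomWhiskerLeft η₁ m)

lemma vOrth_of_forall_ordOrth_tensor (hB : Tensored V B) {A₁ A₂ X₁ X₂ : B} {e : A₁ ⟶ A₂}
    {m : X₁ ⟶ X₂}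
    (h : ∀ (v : V) {T₁ T₂ : B} (η₁ : v ⟶ (A₁ ⟶[V] T₁)) (η₂ : v ⟶ (A₂ ⟶[V] T₂)),
      IsTensorUnit V B v A₁ T₁ η₁ → IsTensorUnit V B v A₂ T₂ η₂ → ∀ t : T₁ ⟶ T₂,
        η₁ ≫ eHomWhiskerLeft V A₁ t = η₂ ≫ eHomWhiskerRight V e T₂ → OrdOrth B t m) :
    VOrth V B e m := by
  refine isPullback_of_existsUnique_lift (eHom_whisker_exchange V e m) fun Z a b hab => ?_
  obtain ⟨T₁, η₁, h₁⟩ := hB Z A₁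
  obtain ⟨T₂, η₂, h₂⟩ := hB Z A₂
  -- `t` is `Z ⊗ e`
  obtain ⟨t, ht : η₁ ≫ _ = _⟩ := (h₁.bijective T₂).2 (η₂ ≫ eHomWhiskerRight V e T₂)
  obtain ⟨u, rfl⟩ := (h₁.bijective X₁).2 b
  obtain ⟨w, rfl⟩ := (h₂.bijective X₂).2 a
  have hη : ∀ {X : B} (d : T₂ ⟶ X),
      η₂ ≫ eHomWhiskerLeft V A₂ d ≫ eHomWhiskerRight V e X =
        η₁ ≫ eHomWhiskerLeft V A₁ (t ≫ d) := by
    intro X d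
    rw [eHom_whisker_exchange, ← Category.assoc, ← ht, Category.assoc, eHomWhiskerLeft_comp]
  have huw : u ≫ m = t ≫ w := h₁.comp_eHomWhiskerLeft_inj.1 <| by
    simpa only [Category.assoc, hη, ← eHomWhiskerLeft_comp] using hab.symm
  rw [(h₂.bijective X₁).existsUnique_iff]
  simpa only [Category.assoc, hη, ← eHomWhiskerLeft_comp, h₁.comp_eHomWhiskerLeft_inj,
    h₂.comp_eHomWhiskerLeft_inj, and_comm] using h Z η₁ η₂ h₁ h₂ t ht u w huw

lemma closedUnderTensors_vLlp (H : MorphismProperty B) : ClosedUnderTensors V B (vLlp V B H) :=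
  fun _ _ _ _ _ _ _ _ h₁ h₂ he _ ht _ _ m hm => (he m hm).tensor h₁ h₂ ht

lemma ordRlp_le_vRlp (hB : Tensored V B) {H : MorphismProperty B}
    (hH : ClosedUnderTensors V B H) : ordRlp B H ≤ vRlp V B H :=
  fun _ _ _ hm _ _ e he => vOrth_of_forall_ordOrth_tensor hB
    fun v _ _ η₁ η₂ h₁ h₂ t ht => hm t (hH v e η₁ η₂ h₁ h₂ he t ht)

end Tensor

section Cotensor

variable [SymmetricCategory V] [MonoidalClosed V]

lemma uncurry_cotensorComparison {v : V} {C X : B} (ε : v ⟶ (C ⟶[V] X)) (A : B) :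
    MonoidalClosed.uncurry (cotensorComparison V B ε A) =
      (ε ▷ (A ⟶[V] C)) ≫ (β_ (C ⟶[V] X) (A ⟶[V] C)).hom ≫ eComp V A C X := by
  dsimp [cotensorComparison]
  rw [MonoidalClosed.uncurry_eq, MonoidalCategory.whiskerLeft_comp_assoc,
    ← MonoidalClosed.uncurry_eq, MonoidalClosed.uncurry_pre, whisker_exchange_assoc,
    ← MonoidalClosed.uncurry_eq, MonoidalClosed.uncurry_curry]

lemma uncurry_eHomEquiv_comp_cotensorComparison {v : V} {C X A : B} (ε : v ⟶ (C ⟶[V] X))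
    (a : A ⟶ C) :
    (ρ_ v).inv ≫ MonoidalClosed.uncurry (eHomEquiv V a ≫ cotensorComparison V B ε A) =
      ε ≫ eHomWhiskerRight V a X := by
  rw [MonoidalClosed.uncurry_natural_left, uncurry_cotensorComparison,
    whisker_exchange_assoc, ← rightUnitor_inv_naturality_assoc,
    BraidedCategory.braiding_naturality_right_assoc, rightUnitor_inv_braiding_assoc]
  rfl

lemma cotensorComparison_map_eHomWhiskerRight {v : V} {C X : B} (ε : v ⟶ (C ⟶[V] X))
    {A₁ A₂ : B} (e : A₁ ⟶ A₂) :
    cotensorComparison V B ε A₂ ≫ (ihom v).map (eHomWhiskerRight V e X) =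
      eHomWhiskerRight V e C ≫ cotensorComparison V B ε A₁ := by
  apply MonoidalClosed.uncurry_injective
  rw [MonoidalClosed.uncurry_natural_right, MonoidalClosed.uncurry_natural_left,
    uncurry_cotensorComparison, uncurry_cotensorComparison, Category.assoc,
    Category.assoc, eComp_eHomWhiskerRight, ← BraidedCategory.braiding_naturality_right_assoc,
    whisker_exchange_assoc]

lemma cotensorComparison_map_eHomWhiskerLeft {v : V} {X₁ X₂ C₁ C₂ : B} {m : X₁ ⟶ X₂}
    {ε₁ : v ⟶ (C₁ ⟶[V] X₁)} {ε₂ : v ⟶ (C₂ ⟶[V] X₂)} {t : C₁ ⟶ C₂}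
    (ht : ε₁ ≫ eHomWhiskerLeft V C₁ m = ε₂ ≫ eHomWhiskerRight V t X₂) (A : B) :
    cotensorComparison V B ε₁ A ≫ (ihom v).map (eHomWhiskerLeft V A m) =
      eHomWhiskerLeft V A t ≫ cotensorComparison V B ε₂ A := by
  apply MonoidalClosed.uncurry_injective
  rw [MonoidalClosed.uncurry_natural_right, MonoidalClosed.uncurry_natural_left,
    uncurry_cotensorComparison, uncurry_cotensorComparison, Category.assoc,
    Category.assoc, eComp_eHomWhiskerLeft, ← BraidedCategory.braiding_naturality_left_assoc,
    ← comp_whiskerRight_assoc, ht, comp_whiskerRight_assoc,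
    whisker_exchange_assoc, BraidedCategory.braiding_naturality_right_assoc,
    eHomWhiskerLeft_whiskerRight_eComp, BraidedCategory.braiding_naturality_left_assoc]

lemma IsCotensorCounit.bijective {v : V} {C X : B} {ε : v ⟶ (C ⟶[V] X)}
    (h : IsCotensorCounit V B v X C ε) (A : B) :
    Function.Bijective fun a : A ⟶ C => ε ≫ eHomWhiskerRight V a X := by
  have := h A
  refine (Function.bijective_iff_existsUnique _).2 fun z => ⟨(eHomEquiv V).symm
    (MonoidalClosed.curry ((ρ_ v).hom ≫ z) ≫ inv (cotensorComparison V B ε A)), ?_, ?_⟩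
  · dsimp only
    rw [← uncurry_eHomEquiv_comp_cotensorComparison, Equiv.apply_symm_apply, Category.assoc,
      IsIso.inv_hom_id, Category.comp_id, MonoidalClosed.uncurry_curry, Iso.inv_hom_id_assoc]
  · intro a ha
    rw [← uncurry_eHomEquiv_comp_cotensorComparison] at ha
    apply (eHomEquiv V).injective
    rw [Equiv.apply_symm_apply, IsIso.eq_comp_inv]
    apply MonoidalClosed.uncurry_injective
    rw [MonoidalClosed.uncurry_curry, ← ha, Iso.hom_inv_id_assoc]

lemma IsCotensorCounit.comp_eHomWhiskerRight_inj {v : V} {C X A : B}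
    {ε : v ⟶ (C ⟶[V] X)} (h : IsCotensorCounit V B v X C ε) {f g : A ⟶ C} :
    ε ≫ eHomWhiskerRight V f X = ε ≫ eHomWhiskerRight V g X ↔ f = g :=
  (h.bijective A).injective.eq_iff

lemma VOrth.cotensor {v : V} {A₁ A₂ X₁ X₂ C₁ C₂ : B} {e : A₁ ⟶ A₂} {m : X₁ ⟶ X₂}
    {ε₁ : v ⟶ (C₁ ⟶[V] X₁)} {ε₂ : v ⟶ (C₂ ⟶[V] X₂)} (he : VOrth V B e m)
    (h₁ : IsCotensorCounit V B v X₁ C₁ ε₁) (h₂ : IsCotensorCounit V B v X₂ C₂ ε₂)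
    {t : C₁ ⟶ C₂} (ht : ε₁ ≫ eHomWhiskerLeft V C₁ m = ε₂ ≫ eHomWhiskerRight V t X₂) :
    VOrth V B e t := by
  have := h₁ A₁; have := h₁ A₂; have := h₂ A₁; have := h₂ A₂
  exact (he.map (ihom v)).of_iso'
    (asIso (cotensorComparison V B ε₁ A₂)) (asIso (cotensorComparison V B ε₂ A₂))
    (asIso (cotensorComparison V B ε₁ A₁)) (asIso (cotensorComparison V B ε₂ A₁))
    (cotensorComparison_map_eHomWhiskerLeft ht A₂) (cotensorComparison_map_eHomWhiskerRight ε₁ e)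
    (cotensorComparison_map_eHomWhiskerRight ε₂ e) (cotensorComparison_map_eHomWhiskerLeft ht A₁)

lemma vOrth_of_forall_ordOrth_cotensor (hB : Cotensored V B) {A₁ A₂ X₁ X₂ : B}
    {e : A₁ ⟶ A₂} {m : X₁ ⟶ X₂}
    (h : ∀ (v : V) {C₁ C₂ : B} (ε₁ : v ⟶ (C₁ ⟶[V] X₁)) (ε₂ : v ⟶ (C₂ ⟶[V] X₂)),
      IsCotensorCounit V B v X₁ C₁ ε₁ → IsCotensorCounit V B v X₂ C₂ ε₂ → ∀ t : C₁ ⟶ C₂,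
        ε₁ ≫ eHomWhiskerLeft V C₁ m = ε₂ ≫ eHomWhiskerRight V t X₂ → OrdOrth B e t) :
    VOrth V B e m := by
  refine isPullback_of_existsUnique_lift (eHom_whisker_exchange V e m) fun Z a b hab => ?_
  obtain ⟨C₁, ε₁, h₁⟩ := hB Z X₁
  obtain ⟨C₂, ε₂, h₂⟩ := hB Z X₂
  -- `t` is `[Z, m]`
  obtain ⟨t, ht : ε₂ ≫ _ = _⟩ := (h₂.bijective C₁).2 (ε₁ ≫ eHomWhiskerLeft V C₁ m)
  obtain ⟨u, rfl⟩ := (h₁.bijective A₁).2 b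
  obtain ⟨w, rfl⟩ := (h₂.bijective A₂).2 a
  have hε : ∀ {A : B} (d : A ⟶ C₁),
      ε₁ ≫ eHomWhiskerRight V d X₁ ≫ eHomWhiskerLeft V A m =
        ε₂ ≫ eHomWhiskerRight V (d ≫ t) X₂ := by
    intro A d
    rw [← eHom_whisker_exchange, ← Category.assoc, ← ht, Category.assoc, eHomWhiskerRight_comp]
  have huw : u ≫ t = e ≫ w := h₂.comp_eHomWhiskerRight_inj.1 <| by
    simpa only [Category.assoc, hε, ← eHomWhiskerRight_comp] using hab.symm
  rw [(h₁.bijective A₂).existsUnique_iff]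
  simpa only [Category.assoc, hε, ← eHomWhiskerRight_comp, h₁.comp_eHomWhiskerRight_inj,
    h₂.comp_eHomWhiskerRight_inj, and_comm] using h Z ε₁ ε₂ h₁ h₂ t ht.symm u w huw

lemma closedUnderCotensors_vRlp (H : MorphismProperty B) :
    ClosedUnderCotensors V B (vRlp V B H) :=
  fun _ _ _ _ _ _ _ _ h₁ h₂ hm _ ht _ _ e he => (hm e he).cotensor h₁ h₂ ht

lemma ordLlp_le_vLlp (hB : Cotensored V B) {H : MorphismProperty B}
    (hH : ClosedUnderCotensors V B H) : ordLlp B H ≤ vLlp V B H :=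
  fun _ _ _ he _ _ m hm => vOrth_of_forall_ordOrth_cotensor hB
    fun v _ _ ε₁ ε₂ h₁ h₂ t ht => he t (hH v m ε₁ ε₂ h₁ h₂ hm t ht)

end Cotensor

end

variable (V : Type u₁) [Category.{v₁} V] [MonoidalCategory V] [SymmetricCategory V]
  [MonoidalClosed V]
variable (B : Type u₂) [Category.{v₂} B] [EnrichedOrdinaryCategory V B]

/-- For tensored and cotensored `B`: `(E,M)` is a `V`-prefactorization system iff it is
an ordinary prefactorization system with `E` closed under tensors and `M` closed
under cotensors. -/
theorem stmt6 (ht : Tensored V B) (hc : Cotensored V B) (E M : MorphismProperty B) :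
    IsVPrefactorization V B E M ↔
      (IsOrdPrefactorization B E M ∧
        ClosedUnderTensors V B E ∧ ClosedUnderCotensors V B M) := by
  have vRlp_eq (hE : ClosedUnderTensors V B E) : vRlp V B E = ordRlp B E :=
    le_antisymm (vRlp_le_ordRlp E) (ordRlp_le_vRlp ht hE)
  have vLlp_eq (hM : ClosedUnderCotensors V B M) : vLlp V B M = ordLlp B M :=
    le_antisymm (vLlp_le_ordLlp M) (ordLlp_le_vLlp hc hM)
  constructor
  · rintro ⟨hR, hL⟩
    have hE : ClosedUnderTensors V B E := hL ▸ closedUnderTensors_vLlp M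
    have hM : ClosedUnderCotensors V B M := hR ▸ closedUnderCotensors_vRlp E
    exact ⟨⟨(vRlp_eq hE).symm.trans hR, (vLlp_eq hM).symm.trans hL⟩, hE, hM⟩
  · rintro ⟨⟨hR, hL⟩, hE, hM⟩
    exact ⟨(vRlp_eq hE).trans hR, (vLlp_eq hM).trans hL⟩

end EnrichedFS
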